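/- Let n ≥ 1, i ≥ 0, j ≥ 1 be integers. Let U ⊆ S_i be a ℂ-subspace and let U_j ⊆ S_{i+j} be the image of the multiplication map U ⊗ S_j → S_{i+j}. If 0 ≠ U ⊊ S_i, then dim(U_j) > dim(U) · C(i+j+n, n) / C(i+n, n), i.e. dim(U_j) · C(i+n, n) > dim(U) · C(i+j+n, n). -/

import Mathlib

open MvPolynomial

/-!
Fix a monomial order. The leading monomials of `U` form a set `M` of exponents of degree `i`
with `#M = dim U`, and the leading monomials of `U · S_j` contain `M + Δ_j`, where `Δ_d` is the
set of all exponents of degree `d`. It therefore suffices that the density `#M / #Δ_d` grows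
strictly under `M ↦ M + Δ_1` when `∅ ≠ M ⊊ Δ_d`, and weakly for every `M ⊆ Δ_d`.

Weight a pair `(μ, k)` by `μ k`. Raising `μ ∈ M` at `k` injects `M × σ` into
`(M + Δ_1) × σ`, and the raised pair has weight `μ k + 1`; summing weights gives
`(d + #σ) · #M ≤ (d + 1) · #(M + Δ_1)`, while `(d + #σ) · #Δ_d = (d + 1) · #Δ_{d+1}`.
The inequality is strict as soon as some `u ∈ M` and `v ∉ M` satisfy `u + e_l = v + e_k`: the
pair `(u + e_l, k)` has positive weight but is not a raised pair. Such an exchange exists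
because walking from `M` towards a missing exponent one unit at a time must leave `M`.
-/

open Finset Pointwise Module

variable {σ : Type*}

section MonomialsOfDegree

variable [Fintype σ] [DecidableEq σ] {d e : ℕ} {μ : σ →₀ ℕ}

variable (σ) in
noncomputable def monomialsOfDegree (d : ℕ) : Finset (σ →₀ ℕ) :=
  univ.finsuppAntidiag d

theorem mem_monomialsOfDegree : μ ∈ monomialsOfDegree σ d ↔ μ.degree = d := by
  simp [monomialsOfDegree, Finsupp.degree_eq_sum]

theorem card_monomialsOfDegree :
    #(monomialsOfDegree σ d) = (Fintype.card σ + d - 1).choose d := by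
  rw [monomialsOfDegree, card_finsuppAntidiag_nat_eq_choose, card_univ]

theorem monomialsOfDegree_add_subset :
    monomialsOfDegree σ d + monomialsOfDegree σ e ⊆ monomialsOfDegree σ (d + e) := by
  simp only [subset_iff, mem_add, mem_monomialsOfDegree]
  rintro _ ⟨a, rfl, b, rfl, rfl⟩
  exact map_add _ a b

theorem monomialsOfDegree_add_one :
    monomialsOfDegree σ d + monomialsOfDegree σ 1 = monomialsOfDegree σ (d + 1) := by
  refine monomialsOfDegree_add_subset.antisymm fun μ hμ ↦ ?_
  rw [mem_monomialsOfDegree] at hμ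
  obtain ⟨k, hk⟩ : ∃ k, μ k ≠ 0 := by
    by_contra! h
    simp [show μ = 0 from Finsupp.ext h] at hμ
  have hμk := tsub_add_cancel_of_le (Finsupp.single_le_iff.2 (Nat.one_le_iff_ne_zero.2 hk))
  refine mem_add.2 ⟨μ - Finsupp.single k 1, ?_, Finsupp.single k 1,
    by simp [mem_monomialsOfDegree], hμk⟩
  have := congrArg Finsupp.degree hμk
  rw [map_add, Finsupp.degree_single, hμ] at this
  exact mem_monomialsOfDegree.2 (by omega)

end MonomialsOfDegree

theorem Finsupp.exists_lt_apply_of_degree_eq [Fintype σ] {u w : σ →₀ ℕ} (hne : u ≠ w)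
    (h : u.degree = w.degree) : ∃ k, w k < u k := by
  by_contra! hle
  rw [Finsupp.degree_eq_sum, Finsupp.degree_eq_sum, sum_eq_sum_iff_of_le fun k _ ↦ hle k] at h
  exact hne (Finsupp.ext fun k ↦ h k (mem_univ k))

noncomputable def raise (p : (σ →₀ ℕ) × σ) : (σ →₀ ℕ) × σ := (p.1 + Finsupp.single p.2 1, p.2)

theorem raise_injective : Function.Injective (raise (σ := σ)) := by
  rintro ⟨μ, k⟩ ⟨ν, l⟩ h
  simp only [raise, Prod.mk.injEq] at h
  obtain ⟨h, rfl⟩ := h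
  simpa using h

section DoubleCounting

variable [Fintype σ] [DecidableEq σ] {M : Finset (σ →₀ ℕ)} {d : ℕ}

theorem sum_apply_product_univ {S : Finset (σ →₀ ℕ)} (hS : S ⊆ monomialsOfDegree σ d) :
    ∑ p ∈ S ×ˢ univ, p.1 p.2 = d * #S := by
  rw [sum_product, sum_congr rfl fun μ hμ ↦ ?_, sum_const, smul_eq_mul, mul_comm]
  rw [← Finsupp.degree_eq_sum, ← mem_monomialsOfDegree]
  exact hS hμ

theorem sum_apply_image_raise (hM : M ⊆ monomialsOfDegree σ d) :
    ∑ p ∈ (M ×ˢ univ).image raise, p.1 p.2 = (d + Fintype.card σ) * #M := by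
  rw [sum_image raise_injective.injOn]
  simp only [raise, Finsupp.add_apply, Finsupp.single_eq_same]
  rw [sum_add_distrib, sum_apply_product_univ hM]
  simp only [sum_const, card_product, card_univ, smul_eq_mul, mul_one]
  ring

theorem image_raise_subset :
    (M ×ˢ univ).image raise ⊆ (M + monomialsOfDegree σ 1) ×ˢ univ := by
  simp only [subset_iff, mem_image, mem_product, mem_univ, and_true]
  rintro _ ⟨⟨μ, k⟩, hμ, rfl⟩
  exact add_mem_add hμ (by simp [mem_monomialsOfDegree])

theorem card_mul_le_card_add_mul (hM : M ⊆ monomialsOfDegree σ d) :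
    (d + Fintype.card σ) * #M ≤ (d + 1) * #(M + monomialsOfDegree σ 1) := by
  have hM1 := (add_subset_add_right hM).trans (monomialsOfDegree_add_subset (e := 1))
  rw [← sum_apply_image_raise hM, ← sum_apply_product_univ hM1]
  exact sum_le_sum_of_subset image_raise_subset

theorem card_mul_lt_card_add_mul (hM : M ⊆ monomialsOfDegree σ d)
    {u v : σ →₀ ℕ} (hu : u ∈ M) (hv : v ∉ M) {k l : σ}
    (huv : u + Finsupp.single l 1 = v + Finsupp.single k 1) :
    (d + Fintype.card σ) * #M < (d + 1) * #(M + monomialsOfDegree σ 1) := by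
  have hM1 := (add_subset_add_right hM).trans (monomialsOfDegree_add_subset (e := 1))
  rw [← sum_apply_image_raise hM, ← sum_apply_product_univ hM1]
  refine sum_lt_sum_of_subset image_raise_subset (i := (u + Finsupp.single l 1, k)) ?_ ?_ ?_
    fun _ _ _ ↦ Nat.zero_le _
  · exact mem_product.2 ⟨add_mem_add hu (by simp [mem_monomialsOfDegree]), mem_univ k⟩
  · simp only [mem_image, mem_product, mem_univ, and_true, raise, Prod.mk.injEq, huv]
    rintro ⟨⟨μ, k'⟩, hμ, h, rfl⟩
    exact hv (add_right_cancel h ▸ hμ)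
  · simp [huv]

theorem exists_exchange (hM : M ⊆ monomialsOfDegree σ d)
    (hne : M.Nonempty) (hM' : M ≠ monomialsOfDegree σ d) :
    ∃ u ∈ M, ∃ v ∉ M, ∃ k l : σ, u + Finsupp.single l 1 = v + Finsupp.single k 1 := by
  obtain ⟨w, hw, hwM⟩ := not_subset.1 fun h ↦ hM' (hM.antisymm h)
  obtain ⟨u, hu, hmin⟩ := M.exists_min_image (fun u ↦ (u - w).degree) hne
  have huw : u ≠ w := by rintro rfl; exact hwM hu
  have hdeg : u.degree = w.degree := by
    rw [mem_monomialsOfDegree.1 (hM hu), mem_monomialsOfDegree.1 hw]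
  obtain ⟨k, hk⟩ := Finsupp.exists_lt_apply_of_degree_eq huw hdeg
  obtain ⟨l, hl⟩ := Finsupp.exists_lt_apply_of_degree_eq huw.symm hdeg.symm
  set v := u - Finsupp.single k 1 + Finsupp.single l 1
  refine ⟨u, hu, v, fun hv ↦ ?_, k, l, ?_⟩
  · have hvw : v - w + Finsupp.single k 1 = u - w := by
      ext j
      simp only [v, Finsupp.coe_add, Finsupp.coe_tsub, Pi.add_apply, Pi.sub_apply,
        Finsupp.single_apply]
      split_ifs <;> subst_vars <;> omega
    have := hmin v hv
    rw [← hvw, map_add, Finsupp.degree_single] at this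
    omega
  · ext j
    simp only [v, Finsupp.coe_add, Finsupp.coe_tsub, Pi.add_apply, Pi.sub_apply,
      Finsupp.single_apply]
    split_ifs <;> subst_vars <;> omega

end DoubleCounting

section Density

variable [Fintype σ] [DecidableEq σ] {M : Finset (σ →₀ ℕ)} {d j : ℕ}

noncomputable def density (M : Finset (σ →₀ ℕ)) (d : ℕ) : ℚ := #M / #(monomialsOfDegree σ d)

theorem density_add_one_eq_div :
    density (M + monomialsOfDegree σ 1) (d + 1) =
      ((d + 1) * #(M + monomialsOfDegree σ 1) : ℕ) /
        ((d + 1) * #(monomialsOfDegree σ (d + 1)) : ℕ) := by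
  rw [density, Nat.cast_mul, Nat.cast_mul, mul_div_mul_left _ _ (by positivity)]

variable [Nonempty σ]

theorem card_monomialsOfDegree_pos : 0 < #(monomialsOfDegree σ d) := by
  have := Fintype.card_pos (α := σ)
  rw [card_monomialsOfDegree]
  exact Nat.choose_pos (by omega)

theorem add_one_mul_card_monomialsOfDegree_add_one :
    (d + 1) * #(monomialsOfDegree σ (d + 1)) =
      (d + Fintype.card σ) * #(monomialsOfDegree σ d) := by
  obtain ⟨N, hN⟩ := Nat.exists_eq_add_one.2 (Fintype.card_pos (α := σ))
  rw [card_monomialsOfDegree, card_monomialsOfDegree, hN,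
    show N + 1 + (d + 1) - 1 = N + d + 1 by omega, show N + 1 + d - 1 = N + d by omega,
    show d + (N + 1) = N + d + 1 by omega, Nat.add_one_mul_choose_eq, mul_comm]

theorem density_eq_div :
    density M d =
      ((d + Fintype.card σ) * #M : ℕ) / ((d + 1) * #(monomialsOfDegree σ (d + 1)) : ℕ) := by
  rw [add_one_mul_card_monomialsOfDegree_add_one, density, Nat.cast_mul, Nat.cast_mul,
    mul_div_mul_left _ _ (by positivity)]

theorem density_le_density_add_one (hM : M ⊆ monomialsOfDegree σ d) :
    density M d ≤ density (M + monomialsOfDegree σ 1) (d + 1) := by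
  rw [density_eq_div, density_add_one_eq_div]
  exact div_le_div_of_nonneg_right (mod_cast card_mul_le_card_add_mul hM) (Nat.cast_nonneg _)

theorem density_lt_density_add_one (hM : M ⊆ monomialsOfDegree σ d) (hne : M.Nonempty)
    (hM' : M ≠ monomialsOfDegree σ d) :
    density M d < density (M + monomialsOfDegree σ 1) (d + 1) := by
  obtain ⟨u, hu, v, hv, k, l, huv⟩ := exists_exchange hM hne hM'
  have := card_monomialsOfDegree_pos (σ := σ) (d := d + 1)
  rw [density_eq_div, density_add_one_eq_div]
  exact div_lt_div_of_pos_right (mod_cast card_mul_lt_card_add_mul hM hu hv huv) (by positivity)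

theorem density_le_density_add (hM : M ⊆ monomialsOfDegree σ d) (j : ℕ) :
    density M d ≤ density (M + monomialsOfDegree σ j) (d + j) := by
  induction j with
  | zero => simp [monomialsOfDegree, singleton_zero]
  | succ j ih =>
    have hMj := (add_subset_add_right hM).trans (monomialsOfDegree_add_subset (e := j))
    calc density M d ≤ density (M + monomialsOfDegree σ j) (d + j) := ih
      _ ≤ density (M + monomialsOfDegree σ j + monomialsOfDegree σ 1) (d + j + 1) :=
        density_le_density_add_one hMj
      _ = density (M + monomialsOfDegree σ (j + 1)) (d + (j + 1)) := by
        rw [add_assoc, monomialsOfDegree_add_one, add_assoc]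

theorem density_lt_density_add (hM : M ⊆ monomialsOfDegree σ d) (hne : M.Nonempty)
    (hM' : M ≠ monomialsOfDegree σ d) (hj : 1 ≤ j) :
    density M d < density (M + monomialsOfDegree σ j) (d + j) := by
  obtain ⟨j, rfl⟩ := Nat.exists_eq_add_of_le' hj
  have hM1 := (add_subset_add_right hM).trans (monomialsOfDegree_add_subset (e := 1))
  calc density M d < density (M + monomialsOfDegree σ 1) (d + 1) :=
        density_lt_density_add_one hM hne hM'
    _ ≤ density (M + monomialsOfDegree σ 1 + monomialsOfDegree σ j) (d + 1 + j) :=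
        density_le_density_add hM1 j
    _ = density (M + monomialsOfDegree σ (j + 1)) (d + (j + 1)) := by
        rw [add_assoc, add_comm (monomialsOfDegree σ 1), monomialsOfDegree_add_one, add_assoc,
          add_comm 1 j]

end Density

instance MvPolynomial.homogeneousSubmodule.finite [Finite σ] (R : Type*) [CommSemiring R] (d : ℕ) :
    Module.Finite R (homogeneousSubmodule σ R d) :=
  Module.Finite.iff_fg.2 (homogeneousSubmodule_fg σ R d)

namespace MonomialOrder

variable {K : Type*} [Field K] (m : MonomialOrder σ)

theorem linearIndependent_of_injective_degree {ι : Type*} {f : ι → MvPolynomial σ K}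
    (hf : ∀ i, f i ≠ 0) (hinj : Function.Injective (m.degree ∘ f)) : LinearIndependent K f := by
  classical
  rw [linearIndependent_iff']
  intro t c hsum
  by_contra! hc
  obtain ⟨i₀, hi₀, hmax⟩ := (t.filter (c · ≠ 0)).exists_max_image (m.toSyn ∘ m.degree ∘ f)
    (by obtain ⟨i, hi, hci⟩ := hc; exact ⟨i, mem_filter.2 ⟨hi, hci⟩⟩)
  rw [mem_filter] at hi₀
  have hcoeff : coeff (m.degree (f i₀)) (∑ i ∈ t, c i • f i) = c i₀ * m.leadingCoeff (f i₀) := by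
    rw [coeff_sum, sum_eq_single_of_mem i₀ hi₀.1]
    · rw [coeff_smul, smul_eq_mul, leadingCoeff]
    · intro i hi hne
      by_cases hci : c i = 0
      · rw [hci, zero_smul, coeff_zero]
      · have hlt : m.degree (f i) ≺[m] m.degree (f i₀) :=
          (hmax i (mem_filter.2 ⟨hi, hci⟩)).lt_of_ne fun h ↦ hne (hinj (m.toSyn.injective h))
        rw [coeff_smul, m.coeff_eq_zero_of_lt hlt, smul_zero]
  rw [hsum, coeff_zero] at hcoeff
  exact mul_ne_zero hi₀.2 (m.leadingCoeff_ne_zero_iff.2 (hf i₀)) hcoeff.symm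

theorem card_le_finrank_of_forall_exists_degree_eq {V : Submodule K (MvPolynomial σ K)}
    [FiniteDimensional K V] {s : Finset (σ →₀ ℕ)}
    (hs : ∀ μ ∈ s, ∃ f ∈ V, f ≠ 0 ∧ m.degree f = μ) : #s ≤ finrank K V := by
  choose f hfV hf0 hdeg using hs
  have hli : LinearIndependent K fun μ : s ↦ (⟨f μ μ.2, hfV μ μ.2⟩ : V) :=
    .of_comp V.subtype <| m.linearIndependent_of_injective_degree (fun μ ↦ hf0 μ μ.2)
      fun μ ν h ↦ Subtype.ext (by simpa [hdeg] using h)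
  simpa using hli.fintype_card_le_finrank

theorem finrank_le_card_of_degree_mem {V : Submodule K (MvPolynomial σ K)} {s : Finset (σ →₀ ℕ)}
    (hs : ∀ f ∈ V, f ≠ 0 → m.degree f ∈ s) : finrank K V ≤ #s := by
  let π : V →ₗ[K] s → K := LinearMap.pi fun μ ↦ (lcoeff K μ.1).comp V.subtype
  have hπ : Function.Injective π := by
    rw [injective_iff_map_eq_zero]
    intro f hf
    by_contra hf0
    have hf0' : (f : MvPolynomial σ K) ≠ 0 := by simpa using hf0
    have := congrFun hf ⟨_, hs f f.2 hf0'⟩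
    exact m.coeff_degree_ne_zero_iff.2 hf0' this
  simpa using LinearMap.finrank_le_finrank_of_injective hπ

variable [Fintype σ] [DecidableEq σ] {d : ℕ} {V : Submodule K (MvPolynomial σ K)}

theorem degree_mem_monomialsOfDegree {f : MvPolynomial σ K} (hf : f ∈ homogeneousSubmodule σ K d)
    (hf0 : f ≠ 0) : m.degree f ∈ monomialsOfDegree σ d := by
  rw [mem_monomialsOfDegree, Finsupp.degree_eq_weight_one]
  exact hf (m.coeff_degree_ne_zero_iff.2 hf0)

variable (d V) in
open scoped Classical in
noncomputable def leadingMonomials : Finset (σ →₀ ℕ) :=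
  {μ ∈ monomialsOfDegree σ d | ∃ f ∈ V, f ≠ 0 ∧ m.degree f = μ}

theorem leadingMonomials_subset : m.leadingMonomials d V ⊆ monomialsOfDegree σ d := by
  classical exact filter_subset _ _

theorem mem_leadingMonomials (hV : V ≤ homogeneousSubmodule σ K d) {μ : σ →₀ ℕ} :
    μ ∈ m.leadingMonomials d V ↔ ∃ f ∈ V, f ≠ 0 ∧ m.degree f = μ := by
  classical
  simp only [leadingMonomials, mem_filter, and_iff_right_iff_imp]
  rintro ⟨f, hf, hf0, rfl⟩
  exact m.degree_mem_monomialsOfDegree (hV hf) hf0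

theorem finrank_eq_card_leadingMonomials (hV : V ≤ homogeneousSubmodule σ K d) :
    finrank K V = #(m.leadingMonomials d V) := by
  have : FiniteDimensional K V := Submodule.finiteDimensional_of_le hV
  refine le_antisymm (m.finrank_le_card_of_degree_mem fun f hf hf0 ↦ ?_)
    (m.card_le_finrank_of_forall_exists_degree_eq fun μ ↦ (m.mem_leadingMonomials hV).1)
  exact (m.mem_leadingMonomials hV).2 ⟨f, hf, hf0, rfl⟩

theorem leadingMonomials_nonempty (hV : V ≤ homogeneousSubmodule σ K d) (hV0 : V ≠ ⊥) :
    (m.leadingMonomials d V).Nonempty := by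
  obtain ⟨f, hf, hf0⟩ := Submodule.exists_mem_ne_zero_of_ne_bot hV0
  exact ⟨_, (m.mem_leadingMonomials hV).2 ⟨f, hf, hf0, rfl⟩⟩

theorem leadingMonomials_ne (hV : V ≤ homogeneousSubmodule σ K d)
    (hVd : V ≠ homogeneousSubmodule σ K d) : m.leadingMonomials d V ≠ monomialsOfDegree σ d := by
  intro h
  refine hVd (Submodule.eq_of_le_of_finrank_le hV ?_)
  rw [m.finrank_eq_card_leadingMonomials hV, h]
  exact m.finrank_le_card_of_degree_mem fun f hf hf0 ↦ m.degree_mem_monomialsOfDegree hf hf0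

theorem card_add_le_finrank_mul {i : ℕ} (hV : V ≤ homogeneousSubmodule σ K i) (j : ℕ) :
    #(m.leadingMonomials i V + monomialsOfDegree σ j) ≤
      finrank K (V * homogeneousSubmodule σ K j : Submodule K (MvPolynomial σ K)) := by
  have : FiniteDimensional K (V * homogeneousSubmodule σ K j : Submodule K (MvPolynomial σ K)) :=
    Submodule.finiteDimensional_of_le ((mul_le_mul_left hV _).trans (homogeneousSubmodule_mul i j))
  refine m.card_le_finrank_of_forall_exists_degree_eq ?_
  simp only [mem_add]
  rintro _ ⟨a, ha, b, hb, rfl⟩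
  obtain ⟨f, hf, hf0, rfl⟩ := (m.mem_leadingMonomials hV).1 ha
  have hb0 : monomial b (1 : K) ≠ 0 := monomial_eq_zero.not.2 one_ne_zero
  refine ⟨f * monomial b 1, Submodule.mul_mem_mul hf ?_, mul_ne_zero hf0 hb0, ?_⟩
  · exact isHomogeneous_monomial _ (mem_monomialsOfDegree.1 hb)
  · classical
    rw [m.degree_mul hf0 hb0, m.degree_monomial, if_neg one_ne_zero]

end MonomialOrder

theorem stmt1_general (n i j : ℕ) (hj : 1 ≤ j)
    (U : Submodule ℂ (MvPolynomial (Fin (n+1)) ℂ))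
    (hUle : U ≤ homogeneousSubmodule (Fin (n+1)) ℂ i)
    (hU0 : U ≠ ⊥) (hUne : U ≠ homogeneousSubmodule (Fin (n+1)) ℂ i) :
    Module.finrank ℂ ↥(U * homogeneousSubmodule (Fin (n+1)) ℂ j) * (i+n).choose n >
      Module.finrank ℂ ↥U * (i+j+n).choose n := by
  let m : MonomialOrder (Fin (n + 1)) := .lex
  have hcard (d : ℕ) : #(monomialsOfDegree (Fin (n + 1)) d) = (d + n).choose n := by
    rw [card_monomialsOfDegree, Fintype.card_fin, show n + 1 + d - 1 = d + n by omega,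
      Nat.choose_symm_add]
  have hdensity := density_lt_density_add m.leadingMonomials_subset
    (m.leadingMonomials_nonempty hUle hU0) (m.leadingMonomials_ne hUle hUne) hj
  rw [density, density, div_lt_div_iff₀ (Nat.cast_pos.2 card_monomialsOfDegree_pos)
    (Nat.cast_pos.2 card_monomialsOfDegree_pos)] at hdensity
  calc Module.finrank ℂ U * (i + j + n).choose n
      = #(m.leadingMonomials i U) * #(monomialsOfDegree _ (i + j)) := by
        rw [m.finrank_eq_card_leadingMonomials hUle, hcard]
    _ < #(m.leadingMonomials i U + monomialsOfDegree _ j) * #(monomialsOfDegree _ i) := by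
        exact_mod_cast hdensity
    _ ≤ _ := by
        rw [hcard]
        exact Nat.mul_le_mul_right _ (m.card_add_le_finrank_mul hUle j)

/-- If `0 ≠ U ⊊ S_i` is a subspace of the homogeneous polynomials of degree `i` in `n+1`
variables, and `U_j = U·S_j ⊆ S_{i+j}` is the image of the multiplication map
`U ⊗ S_j → S_{i+j}`, then `dim(U_j) · C(i+n,n) > dim(U) · C(i+j+n,n)`. -/
theorem stmt1 (n i j : ℕ) (hn : 1 ≤ n) (hj : 1 ≤ j)
    (U : Submodule ℂ (MvPolynomial (Fin (n+1)) ℂ))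
    (hUle : U ≤ homogeneousSubmodule (Fin (n+1)) ℂ i)
    (hU0 : U ≠ ⊥) (hUne : U ≠ homogeneousSubmodule (Fin (n+1)) ℂ i) :
    Module.finrank ℂ ↥(U * homogeneousSubmodule (Fin (n+1)) ℂ j) * (i+n).choose n >
      Module.finrank ℂ ↥U * (i+j+n).choose n :=
  stmt1_general n i j hj U hUle hU0 hUne
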